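/- For every constructive formula A whose atoms are among p_1, …, p_k and every tuple of formulas φ_1, …, φ_k, there exists a finite multiset Υ of modal Horn formulas all of whose atoms are angled atoms such that CK proves Υ, ⟨A(φ̄)⟩, A(φ̄^t) ⇒ (A(φ̄))^t, and CK proves (⇒ ⋀Υ^s), where s is the standard substitution. -/

import Mathlib

set_option autoImplicit false

namespace UPT

/-- Modal formulas over atoms of type `α` (the language `ℒ = {∧,∨,→,⊤,⊥,□,◇}`). -/
inductive Fml (α : Type) : Type where
  | atom : α → Fml α
  | top  : Fml α
  | bot  : Fml α
  | and  : Fml α → Fml α → Fml α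
  | or   : Fml α → Fml α → Fml α
  | imp  : Fml α → Fml α → Fml α
  | box  : Fml α → Fml α
  | dia  : Fml α → Fml α
deriving DecidableEq

variable {α β : Type}

/-- Simultaneous substitution of formulas for atoms. -/
def Fml.subst (σ : β → Fml α) : Fml β → Fml α
  | .atom b  => σ b
  | .top     => .top
  | .bot     => .bot
  | .and A B => .and (A.subst σ) (B.subst σ)
  | .or A B  => .or (A.subst σ) (B.subst σ)
  | .imp A B => .imp (A.subst σ) (B.subst σ)
  | .box A   => .box (A.subst σ)
  | .dia A   => .dia (A.subst σ)

/-- A sequent: a finite multiset antecedent together with a succedent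
containing at most one formula. -/
abbrev Seq (α : Type) : Type := Multiset (Fml α) × Option (Fml α)

/-- A rule set relates a (finite) list of premise sequents to a conclusion sequent. -/
abbrev RuleSet (α : Type) : Type := List (Seq α) → Seq α → Prop

/-- The axioms and rules of the single-conclusion sequent calculus `LJ`, stated
schematically: they are closed under substituting arbitrary formulas for atoms
and arbitrary multisets (resp. succedents) for the context variables. -/
inductive LJRule : List (Seq α) → Seq α → Prop where
  | id (Γ : Multiset (Fml α)) (A : Fml α) : LJRule [] (A ::ₘ Γ, some A)
  | botL (Γ : Multiset (Fml α)) (Δ : Option (Fml α)) : LJRule [] (.bot ::ₘ Γ, Δ)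
  | topR (Γ : Multiset (Fml α)) : LJRule [] (Γ, some .top)
  | wL (A : Fml α) (Γ : Multiset (Fml α)) (Δ : Option (Fml α)) :
      LJRule [(Γ, Δ)] (A ::ₘ Γ, Δ)
  | wR (A : Fml α) (Γ : Multiset (Fml α)) : LJRule [(Γ, none)] (Γ, some A)
  | cL (A : Fml α) (Γ : Multiset (Fml α)) (Δ : Option (Fml α)) :
      LJRule [(A ::ₘ A ::ₘ Γ, Δ)] (A ::ₘ Γ, Δ)
  | cut (A : Fml α) (Γ : Multiset (Fml α)) (Δ : Option (Fml α)) :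
      LJRule [(Γ, some A), (A ::ₘ Γ, Δ)] (Γ, Δ)
  | andL₁ (A B : Fml α) (Γ : Multiset (Fml α)) (Δ : Option (Fml α)) :
      LJRule [(A ::ₘ Γ, Δ)] (.and A B ::ₘ Γ, Δ)
  | andL₂ (A B : Fml α) (Γ : Multiset (Fml α)) (Δ : Option (Fml α)) :
      LJRule [(B ::ₘ Γ, Δ)] (.and A B ::ₘ Γ, Δ)
  | andR (A B : Fml α) (Γ : Multiset (Fml α)) :
      LJRule [(Γ, some A), (Γ, some B)] (Γ, some (.and A B))
  | orL (A B : Fml α) (Γ : Multiset (Fml α)) (Δ : Option (Fml α)) :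
      LJRule [(A ::ₘ Γ, Δ), (B ::ₘ Γ, Δ)] (.or A B ::ₘ Γ, Δ)
  | orR₁ (A B : Fml α) (Γ : Multiset (Fml α)) : LJRule [(Γ, some A)] (Γ, some (.or A B))
  | orR₂ (A B : Fml α) (Γ : Multiset (Fml α)) : LJRule [(Γ, some B)] (Γ, some (.or A B))
  | impL (A B : Fml α) (Γ : Multiset (Fml α)) (Δ : Option (Fml α)) :
      LJRule [(Γ, some A), (B ::ₘ Γ, Δ)] (.imp A B ::ₘ Γ, Δ)
  | impR (A B : Fml α) (Γ : Multiset (Fml α)) :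
      LJRule [(A ::ₘ Γ, some B)] (Γ, some (.imp A B))

/-- The rule `K_□`: from `Γ ⇒ A` infer `□Γ ⇒ □A`. -/
inductive KBoxRule : List (Seq α) → Seq α → Prop where
  | mk (Γ : Multiset (Fml α)) (A : Fml α) :
      KBoxRule [(Γ, some A)] (Γ.map Fml.box, some (.box A))

/-- The rule `K_◇`: from `Γ, A ⇒ B` infer `□Γ, ◇A ⇒ ◇B`. -/
inductive KDiaRule : List (Seq α) → Seq α → Prop where
  | mk (Γ : Multiset (Fml α)) (A B : Fml α) :
      KDiaRule [(A ::ₘ Γ, some B)] (.dia A ::ₘ Γ.map Fml.box, some (.dia B))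

/-- The rule `◇L`: from `Γ, A ⇒ B` infer `Γ, ◇A ⇒ ◇B`. -/
inductive DiaLRule : List (Seq α) → Seq α → Prop where
  | mk (Γ : Multiset (Fml α)) (A B : Fml α) :
      DiaLRule [(A ::ₘ Γ, some B)] (.dia A ::ₘ Γ, some (.dia B))

/-- Adding a set `Ax` of axioms to a calculus: the initial sequents `⇒ σ(A)`
for every substitution instance `σ(A)` of every `A ∈ Ax`. -/
def axRule (Ax : Fml α → Prop) : RuleSet α := fun ps c =>
  ps = [] ∧ ∃ (A : Fml α) (σ : α → Fml α), Ax A ∧ c = ((0 : Multiset (Fml α)), some (A.subst σ))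

/-- Using a set of sequents as additional initial sequents (assumptions). -/
def hypRule (H : Set (Seq α)) : RuleSet α := fun ps c => ps = [] ∧ c ∈ H

/-- The sequent calculus `LJ+Ax`. -/
def LJSys (Ax : Fml α → Prop) : RuleSet α := fun ps c => LJRule ps c ∨ axRule Ax ps c

/-- The sequent calculus `CK+Ax = LJ + K_□ + K_◇ + Ax`. -/
def CKSys (Ax : Fml α → Prop) : RuleSet α := fun ps c =>
  LJRule ps c ∨ KBoxRule ps c ∨ KDiaRule ps c ∨ axRule Ax ps c

/-- The sequent calculus `CK_□+Ax = LJ + K_□ + Ax`. -/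
def CKBoxSys (Ax : Fml α → Prop) : RuleSet α := fun ps c =>
  LJRule ps c ∨ KBoxRule ps c ∨ axRule Ax ps c

/-- The sequent calculus `BLL+Ax = LJ + ◇L + Ax`. -/
def BLLSys (Ax : Fml α → Prop) : RuleSet α := fun ps c =>
  LJRule ps c ∨ DiaLRule ps c ∨ axRule Ax ps c

/-- Provability of a sequent in the calculus generated by a rule set. -/
inductive Derives (R : RuleSet α) : Multiset (Fml α) → Option (Fml α) → Prop where
  | step {ps : List (Seq α)} {c : Seq α} (hr : R ps c)
      (hp : ∀ p ∈ ps, Derives R p.1 p.2) : Derives R c.1 c.2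

/-- Basic formulas: generated from atoms, `⊤`, `⊥` by `∧`, `∨`, `◇`. -/
inductive Basic : Fml α → Prop where
  | atom (a : α) : Basic (.atom a)
  | top : Basic (.top : Fml α)
  | bot : Basic (.bot : Fml α)
  | and {A B : Fml α} : Basic A → Basic B → Basic (.and A B)
  | or {A B : Fml α} : Basic A → Basic B → Basic (.or A B)
  | dia {A : Fml α} : Basic A → Basic (.dia A)

/-- Almost positive formulas: generated from basic formulas by `∧`, `∨`, `□`, `◇`
and implications `A → B` with `A` basic and `B` almost positive. -/
inductive AlmostPos : Fml α → Prop where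
  | basic {A : Fml α} : Basic A → AlmostPos A
  | and {A B : Fml α} : AlmostPos A → AlmostPos B → AlmostPos (.and A B)
  | or {A B : Fml α} : AlmostPos A → AlmostPos B → AlmostPos (.or A B)
  | box {A : Fml α} : AlmostPos A → AlmostPos (.box A)
  | dia {A : Fml α} : AlmostPos A → AlmostPos (.dia A)
  | imp {A B : Fml α} : Basic A → AlmostPos B → AlmostPos (.imp A B)

/-- Constructive formulas: generated from basic formulas by `∧`, `□` and
implications `A → B` with `A` almost positive and `B` constructive. -/
inductive Constructive : Fml α → Prop where
  | basic {A : Fml α} : Basic A → Constructive A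
  | and {A B : Fml α} : Constructive A → Constructive B → Constructive (.and A B)
  | box {A : Fml α} : Constructive A → Constructive (.box A)
  | imp {A B : Fml α} : AlmostPos A → Constructive B → Constructive (.imp A B)

/-- Harrop formulas: atoms, `⊥`, `⊤`, closed under `∧`, `□`, and implications
`A → B` with `A` arbitrary and `B` Harrop. -/
inductive Harrop : Fml α → Prop where
  | atom (a : α) : Harrop (.atom a)
  | top : Harrop (.top : Fml α)
  | bot : Harrop (.bot : Fml α)
  | and {A B : Fml α} : Harrop A → Harrop B → Harrop (.and A B)
  | box {A : Fml α} : Harrop A → Harrop (.box A)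
  | imp (A : Fml α) {B : Fml α} : Harrop B → Harrop (.imp A B)

/-- Conjunction of a list of formulas (`⋀∅ = ⊤`). -/
def conj : List (Fml α) → Fml α
  | [] => .top
  | [A] => A
  | A :: B :: l => .and A (conj (B :: l))

/-- Disjunction of a list of formulas (`⋁∅ = ⊥`). -/
def disj : List (Fml α) → Fml α
  | [] => .bot
  | [A] => A
  | A :: B :: l => .or A (disj (B :: l))

/-- Disjunction of a succedent (at most one formula; `⋁∅ = ⊥`). -/
def odisj : Option (Fml α) → Fml α
  | none => .bot
  | some A => A

/-- The multiset `{A_i → B_i}_{i ∈ I}` of implications of an indexed family. -/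
def imps (AB : List (Fml α × Fml α)) : Multiset (Fml α) :=
  ↑(AB.map fun p => Fml.imp p.1 p.2)

/-- The conjunction `⋀_{i∈I} (A_i → B_i)` of an indexed family of implications. -/
def impConj (AB : List (Fml α × Fml α)) : Fml α :=
  conj (AB.map fun p => Fml.imp p.1 p.2)

/-- Truth in the one-node *irreflexive* frame `𝒦ᵢ` under a Boolean valuation:
`□A` is always true and `◇A` is always false; the propositional connectives
are evaluated classically. -/
def evalI (v : α → Bool) : Fml α → Bool
  | .atom a  => v a
  | .top     => true
  | .bot     => false
  | .and A B => evalI v A && evalI v B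
  | .or A B  => evalI v A || evalI v B
  | .imp A B => !evalI v A || evalI v B
  | .box _   => true
  | .dia _   => false

/-- Truth in the one-node *reflexive* frame `𝒦ᵣ` under a Boolean valuation:
`□A` and `◇A` take the value of `A`. -/
def evalR (v : α → Bool) : Fml α → Bool
  | .atom a  => v a
  | .top     => true
  | .bot     => false
  | .and A B => evalR v A && evalR v B
  | .or A B  => evalR v A || evalR v B
  | .imp A B => !evalR v A || evalR v B
  | .box A   => evalR v A
  | .dia A   => evalR v A

/-- Validity of a sequent with respect to a one-node semantics: under every
valuation, if all formulas of the antecedent are true then so is the succedent. -/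
def SeqValid (ev : (α → Bool) → Fml α → Bool) (Γ : Multiset (Fml α)) (Δ : Option (Fml α)) :
    Prop :=
  ∀ v : α → Bool, (∀ A ∈ Γ, ev v A = true) → ∃ B ∈ Δ, ev v B = true

/-- `CK+Ax` is T-free: every provable sequent is valid in the irreflexive node frame. -/
def TFree (Ax : Fml α → Prop) : Prop :=
  ∀ (Γ : Multiset (Fml α)) (Δ : Option (Fml α)), Derives (CKSys Ax) Γ Δ → SeqValid evalI Γ Δ

/-- `CK+Ax` is T-full: every provable sequent is valid in the reflexive node
frame and the calculus proves `⇒ □p → p` and `⇒ p → ◇p`. -/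
def TFull (Ax : Fml α → Prop) : Prop :=
  (∀ (Γ : Multiset (Fml α)) (Δ : Option (Fml α)), Derives (CKSys Ax) Γ Δ → SeqValid evalR Γ Δ) ∧
  (∀ a : α, Derives (CKSys Ax) 0 (some (.imp (.box (.atom a)) (.atom a)))) ∧
  (∀ a : α, Derives (CKSys Ax) 0 (some (.imp (.atom a) (.dia (.atom a)))))

/-- Classical validity of a (modality-free) sequent: `⋀Γ → ⋁Δ` is true under
every Boolean valuation of the atoms. -/
def ClValid (Γ : Multiset (Fml α)) (Δ : Option (Fml α)) : Prop :=
  ∀ v : α → Bool, (∀ A ∈ Γ, evalI v A = true) → ∃ B ∈ Δ, evalI v B = true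

/-- Nonempty conjunctions of atoms. -/
inductive AtomConj : Fml α → Prop where
  | single (a : α) : AtomConj (.atom a)
  | and {A B : Fml α} : AtomConj A → AtomConj B → AtomConj (.and A B)

/-- Implicational Horn formulas: `⊥`, atoms, and implications `⋀Q → r` with `Q`
a nonempty multiset of atoms and `r` an atom or `⊥`. -/
inductive ImpHorn : Fml α → Prop where
  | bot : ImpHorn (.bot : Fml α)
  | atom (a : α) : ImpHorn (.atom a)
  | impAtom {A : Fml α} (hA : AtomConj A) (a : α) : ImpHorn (.imp A (.atom a))
  | impBot {A : Fml α} (hA : AtomConj A) : ImpHorn (.imp A .bot)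

/-- Formulas of the form `◇^n p` with `p` an atom and `n ≥ 0`. -/
inductive DiaPowAtom : Fml α → Prop where
  | atom (a : α) : DiaPowAtom (.atom a)
  | dia {A : Fml α} : DiaPowAtom A → DiaPowAtom (.dia A)

/-- Nonempty conjunctions `⋀_{i=1}^k ◇^{n_i} p_i` of formulas `◇^{n_i} p_i`. -/
inductive DiaConj : Fml α → Prop where
  | single {A : Fml α} : DiaPowAtom A → DiaConj A
  | and {A B : Fml α} : DiaConj A → DiaConj B → DiaConj (.and A B)

/-- Modal Horn formulas: `⊥` and atoms, closed under `□` and under implications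
`A → B` with `A = ⋀_{i=1}^k ◇^{n_i} p_i` and `B` modal Horn. -/
inductive ModalHorn : Fml α → Prop where
  | bot : ModalHorn (.bot : Fml α)
  | atom (a : α) : ModalHorn (.atom a)
  | box {A : Fml α} : ModalHorn A → ModalHorn (.box A)
  | imp {A B : Fml α} : DiaConj A → ModalHorn B → ModalHorn (.imp A B)

/-- The predicate "all atoms of the formula satisfy `P`". -/
def Fml.AtomsIn (P : α → Prop) : Fml α → Prop
  | .atom a  => P a
  | .top     => True
  | .bot     => True
  | .and A B => A.AtomsIn P ∧ B.AtomsIn P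
  | .or A B  => A.AtomsIn P ∧ B.AtomsIn P
  | .imp A B => A.AtomsIn P ∧ B.AtomsIn P
  | .box A   => A.AtomsIn P
  | .dia A   => A.AtomsIn P

/-- No `◇` occurs in the formula. -/
def Fml.DiaFree : Fml α → Prop
  | .atom _  => True
  | .top     => True
  | .bot     => True
  | .and A B => A.DiaFree ∧ B.DiaFree
  | .or A B  => A.DiaFree ∧ B.DiaFree
  | .imp A B => A.DiaFree ∧ B.DiaFree
  | .box A   => A.DiaFree
  | .dia _   => False

/-- No `□` occurs in the formula. -/
def Fml.BoxFree : Fml α → Prop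
  | .atom _  => True
  | .top     => True
  | .bot     => True
  | .and A B => A.BoxFree ∧ B.BoxFree
  | .or A B  => A.BoxFree ∧ B.BoxFree
  | .imp A B => A.BoxFree ∧ B.BoxFree
  | .box _   => False
  | .dia A   => A.BoxFree

/-- The formula is modality-free (propositional). -/
def Fml.ModFree : Fml α → Prop
  | .atom _  => True
  | .top     => True
  | .bot     => True
  | .and A B => A.ModFree ∧ B.ModFree
  | .or A B  => A.ModFree ∧ B.ModFree
  | .imp A B => A.ModFree ∧ B.ModFree
  | .box _   => False
  | .dia _   => False

/-- An angling of the language: an injection `φ ↦ ⟨φ⟩` from formulas into the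
atoms whose image (the angled atoms) is disjoint from a fixed infinite set of
plain atoms. -/
structure Angling (α : Type) where
  angle : Fml α → α
  plain : Set α
  inj : Function.Injective angle
  plain_infinite : plain.Infinite
  disjoint : ∀ φ : Fml α, angle φ ∉ plain

/-- `a` is an angled atom. -/
def Angling.Angled (S : Angling α) (a : α) : Prop := ∃ φ : Fml α, S.angle φ = a

/-- The translation `t`: `⊥^t = ⊥`, `p^t = ⟨p⟩`, `⊤^t = ⟨⊤⟩`,
`(A ∘ B)^t = (A^t ∘ B^t) ∧ ⟨A ∘ B⟩` and `(○A)^t = (○A^t) ∧ ⟨○A⟩`. -/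
def Angling.tr (S : Angling α) : Fml α → Fml α
  | .atom a  => .atom (S.angle (.atom a))
  | .top     => .atom (S.angle .top)
  | .bot     => .bot
  | .and A B => .and (.and (S.tr A) (S.tr B)) (.atom (S.angle (.and A B)))
  | .or A B  => .and (.or (S.tr A) (S.tr B)) (.atom (S.angle (.or A B)))
  | .imp A B => .and (.imp (S.tr A) (S.tr B)) (.atom (S.angle (.imp A B)))
  | .box A   => .and (.box (S.tr A)) (.atom (S.angle (.box A)))
  | .dia A   => .and (.dia (S.tr A)) (.atom (S.angle (.dia A)))

/-- Action of the standard substitution on atoms: an angled atom `⟨φ⟩` is sent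
to `φ`; plain atoms are fixed. -/
noncomputable def Angling.stdAtom (S : Angling α) (a : α) : Fml α :=
  haveI := Classical.propDecidable (∃ φ : Fml α, S.angle φ = a)
  if h : ∃ φ : Fml α, S.angle φ = a then h.choose else .atom a

/-- The standard substitution `s`: replaces each angled atom `⟨φ⟩` by `φ`,
fixes the plain atoms, and commutes with all connectives. -/
noncomputable def Angling.std (S : Angling α) : Fml α → Fml α :=
  Fml.subst S.stdAtom

/-- The Visser–Harrop property of a calculus. -/
def VisserHarrop (R : RuleSet α) : Prop :=
  ∀ (Γ : Multiset (Fml α)), (∀ A ∈ Γ, Harrop A) →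
  ∀ (AB : List (Fml α × Fml α)) (C D : Fml α),
    Derives R (Γ + imps AB) (some (.or C D)) →
    Derives R (Γ + imps AB) (some C) ∨
    Derives R (Γ + imps AB) (some D) ∨
    ∃ p ∈ AB, Derives R (Γ + imps AB) (some p.1)

/-- The disjunction property of a calculus. -/
def DisjProp (R : RuleSet α) : Prop :=
  ∀ C D : Fml α, Derives R 0 (some (.or C D)) →
    Derives R 0 (some C) ∨ Derives R 0 (some D)

/-- The formula interpretation `I(Γ ⇒ Δ) = ⋀Γ → ⋁Δ` belongs to `L` (stated for
every enumeration of the antecedent multiset as a list). -/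
def interpIn (L : Set (Fml α)) (s : Seq α) : Prop :=
  ∀ l : List (Fml α), (↑l : Multiset (Fml α)) = s.1 → Fml.imp (conj l) (odisj s.2) ∈ L

/- Named modal axioms (with `p := atom 0`, `q := atom 1`). -/
def axTa : Fml ℕ := .imp (.box (.atom 0)) (.atom 0)
def axTb : Fml ℕ := .imp (.atom 0) (.dia (.atom 0))
def axBa : Fml ℕ := .imp (.dia (.box (.atom 0))) (.atom 0)
def axBb : Fml ℕ := .imp (.atom 0) (.box (.dia (.atom 0)))
def ax4a : Fml ℕ := .imp (.box (.atom 0)) (.box (.box (.atom 0)))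
def ax4b : Fml ℕ := .imp (.dia (.dia (.atom 0))) (.dia (.atom 0))
def ax5a : Fml ℕ := .imp (.dia (.box (.atom 0))) (.box (.atom 0))
def ax5b : Fml ℕ := .imp (.dia (.atom 0)) (.box (.dia (.atom 0)))
def axDiaBot : Fml ℕ := .imp (.dia .bot) .bot
def axDiaOr : Fml ℕ :=
  .imp (.dia (.or (.atom 0) (.atom 1))) (.or (.dia (.atom 0)) (.dia (.atom 1)))
def axBoxImp : Fml ℕ :=
  .imp (.imp (.dia (.atom 0)) (.box (.atom 1))) (.box (.imp (.atom 0) (.atom 1)))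

/-- The axioms of `X ⊆ {T, B, 4, 5}` in both their `a`- and `b`-versions. -/
def XAxioms (tT tB t4 t5 : Bool) : Set (Fml ℕ) :=
  (if tT then ({axTa, axTb} : Set (Fml ℕ)) else ∅) ∪
  (if tB then ({axBa, axBb} : Set (Fml ℕ)) else ∅) ∪
  (if t4 then ({ax4a, ax4b} : Set (Fml ℕ)) else ∅) ∪
  (if t5 then ({ax5a, ax5b} : Set (Fml ℕ)) else ∅)

/-- The additional axioms of `IK` over `CK`. -/
def IKExtra : Set (Fml ℕ) := {axDiaBot, axDiaOr, axBoxImp}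

/-- The right rule with premises `{Γ, φ̄_i ⇒ ψ̄_i}_{i∈I}` and conclusion
`Γ, θ̄ ⇒ η̄`, closed under all substitutions of formulas for atoms and
multisets for the context `Γ`. -/
def rightRuleInst (prems : List (List (Fml α) × Option (Fml α)))
    (θ : List (Fml α)) (η : Option (Fml α)) : RuleSet α := fun ps c =>
  ∃ (σ : α → Fml α) (Γ : Multiset (Fml α)),
    ps = prems.map (fun pr =>
        ((Γ + ↑(pr.1.map (Fml.subst σ)) : Multiset (Fml α)), pr.2.map (Fml.subst σ))) ∧
    c = ((Γ + ↑(θ.map (Fml.subst σ)) : Multiset (Fml α)), η.map (Fml.subst σ))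

/-- The left rule with premises `{Γ, φ̄_i ⇒ ψ̄_i}_{i∈I} ∪ {Γ, θ̄_j ⇒ Δ}_{j∈J}`
and conclusion `Γ, η̄ ⇒ Δ`, closed under all substitutions of formulas for
atoms and multisets for `Γ` and `Δ`. -/
def leftRuleInst (prems : List (List (Fml α) × Option (Fml α)))
    (lefts : List (List (Fml α))) (η : List (Fml α)) : RuleSet α := fun ps c =>
  ∃ (σ : α → Fml α) (Γ : Multiset (Fml α)) (Δ : Option (Fml α)),
    ps = prems.map (fun pr =>
          ((Γ + ↑(pr.1.map (Fml.subst σ)) : Multiset (Fml α)), pr.2.map (Fml.subst σ)))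
        ++ lefts.map (fun θj => ((Γ + ↑(θj.map (Fml.subst σ)) : Multiset (Fml α)), Δ)) ∧
    c = ((Γ + ↑(η.map (Fml.subst σ)) : Multiset (Fml α)), Δ)

/-- The formula `Ax_R` of a right rule. -/
def AxRight (prems : List (List (Fml α) × Option (Fml α)))
    (θ : List (Fml α)) (η : Option (Fml α)) : Fml α :=
  .imp (.and (conj (prems.map fun pr => .imp (conj pr.1) (odisj pr.2))) (conj θ)) (odisj η)

/-- The formula `Ax_R` of a left rule. -/
def AxLeft (prems : List (List (Fml α) × Option (Fml α)))
    (lefts : List (List (Fml α))) (η : List (Fml α)) : Fml α :=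
  .imp (.and (conj (prems.map fun pr => .imp (conj pr.1) (odisj pr.2))) (conj η))
    (disj (lefts.map conj))

/-- The forgetful translation `f_i`: fixes atoms, `⊤`, `⊥`, commutes with
`∧`, `∨`, `→`, `□`, and sends every `◇A` to `⊥`. -/
def fi : Fml α → Fml α
  | .atom a  => .atom a
  | .top     => .top
  | .bot     => .bot
  | .and A B => .and (fi A) (fi B)
  | .or A B  => .or (fi A) (fi B)
  | .imp A B => .imp (fi A) (fi B)
  | .box A   => .box (fi A)
  | .dia _   => .bot

/-- The forgetful translation `f_r`: fixes atoms, `⊤`, `⊥`, commutes with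
`∧`, `∨`, `→`, `□`, and sends `◇A` to `f_r A`. -/
def fr : Fml α → Fml α
  | .atom a  => .atom a
  | .top     => .top
  | .bot     => .bot
  | .and A B => .and (fr A) (fr B)
  | .or A B  => .or (fr A) (fr B)
  | .imp A B => .imp (fr A) (fr B)
  | .box A   => .box (fr A)
  | .dia A   => fr A

/-!
The translation `t` commutes with substitution up to Horn clauses between angled atoms. For basic
`B`, the formula `B(φ̄^t)` together with clauses such as `⟨B⟩ ∧ ⟨C⟩ → ⟨B ∧ C⟩` and
`◇⟨C⟩ → ⟨◇C⟩` rebuilds `B(φ̄)^t`. Conversely, for almost positive `B`, `B(φ̄)^t` yields `B(φ̄^t)`,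
the basic case handling antecedents of implications. For constructive `A` one goes forwards again,
now also given `⟨A(φ̄)⟩`: clauses `⟨B ∧ C⟩ → ⟨B⟩`, `⟨□C⟩ → □⟨C⟩` and `⟨B → C⟩ ∧ ⟨B⟩ → ⟨C⟩` pass it
down to subformulas, and antecedents of implications are handled by the almost positive case.
Under the standard substitution every clause becomes a CK-tautology such as `B ∧ C → B`, and the
clauses boxed to feed the premises of `K_□` and `K_◇` stay provable.
-/

abbrev CKProves {α : Type} (Γ : Multiset (Fml α)) (Δ : Option (Fml α)) : Prop :=
  Derives (CKSys fun _ : Fml α => False) Γ Δ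

namespace CKProves

variable {α : Type} {Γ Γ' : Multiset (Fml α)} {Δ : Option (Fml α)} {A B : Fml α}

theorem of_lj {ps : List (Seq α)} {c : Seq α} (h : LJRule ps c)
    (hps : ∀ p ∈ ps, CKProves p.1 p.2) : CKProves c.1 c.2 :=
  .step (Or.inl h) hps

theorem ax (h : A ∈ Γ) : CKProves Γ (some A) := by
  obtain ⟨Γ, rfl⟩ := Multiset.exists_cons_of_mem h
  exact of_lj (.id Γ A) (by simp)

theorem botL (h : .bot ∈ Γ) : CKProves Γ Δ := by
  obtain ⟨Γ, rfl⟩ := Multiset.exists_cons_of_mem h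
  exact of_lj (.botL Γ Δ) (by simp)

theorem topR : CKProves Γ (some .top) := of_lj (.topR Γ) (by simp)

theorem cut (h₁ : CKProves Γ (some A)) (h₂ : CKProves (A ::ₘ Γ) Δ) : CKProves Γ Δ :=
  of_lj (.cut A Γ Δ) (by simp [h₁, h₂])

theorem weaken (Θ : Multiset (Fml α)) (h : CKProves Γ Δ) : CKProves (Θ + Γ) Δ := by
  induction Θ using Multiset.induction with
  | empty => simpa using h
  | cons A Θ ih => simpa using of_lj (.wL A (Θ + Γ) Δ) (by simp [ih])

theorem contract {Θ : Multiset (Fml α)} (hΘ : Θ ⊆ Γ) (h : CKProves (Θ + Γ) Δ) : CKProves Γ Δ := by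
  induction Θ using Multiset.induction with
  | empty => simpa using h
  | cons A Θ ih =>
    rw [Multiset.cons_subset] at hΘ
    rw [Multiset.cons_add] at h
    exact ih hΘ.2 (cut (ax (Multiset.mem_add.2 (.inr hΘ.1))) h)

/-- `⊆` ignores multiplicities, so this is weakening and contraction at once. -/
theorem mono (h : CKProves Γ Δ) (hΓ : Γ ⊆ Γ') : CKProves Γ' Δ :=
  contract hΓ (add_comm Γ' Γ ▸ weaken Γ' h)

theorem andL (h : .and A B ∈ Γ) (d : CKProves (A ::ₘ B ::ₘ Γ) Δ) : CKProves Γ Δ := by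
  have d₂ := of_lj (.andL₂ A B (A ::ₘ Γ) Δ) (by simpa [Multiset.cons_swap] using d)
  have d₁ := of_lj (.andL₁ A B (.and A B ::ₘ Γ) Δ) (by simpa [Multiset.cons_swap] using d₂)
  exact mono d₁ (by simp [Multiset.cons_subset, h])

theorem orL (h : .or A B ∈ Γ) (d₁ : CKProves (A ::ₘ Γ) Δ) (d₂ : CKProves (B ::ₘ Γ) Δ) :
    CKProves Γ Δ :=
  mono (of_lj (.orL A B Γ Δ) (by simp [d₁, d₂])) (by simp [Multiset.cons_subset, h])

theorem impL (h : .imp A B ∈ Γ) (d₁ : CKProves Γ (some A)) (d₂ : CKProves (B ::ₘ Γ) Δ) :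
    CKProves Γ Δ :=
  mono (of_lj (.impL A B Γ Δ) (by simp [d₁, d₂])) (by simp [Multiset.cons_subset, h])

theorem mp (h : .imp A B ∈ Γ) (d : CKProves Γ (some A)) : CKProves Γ (some B) :=
  impL h d (ax (Multiset.mem_cons_self _ _))

theorem andR (d₁ : CKProves Γ (some A)) (d₂ : CKProves Γ (some B)) :
    CKProves Γ (some (.and A B)) :=
  of_lj (.andR A B Γ) (by simp [d₁, d₂])

theorem orR₁ (d : CKProves Γ (some A)) : CKProves Γ (some (.or A B)) :=
  of_lj (.orR₁ A B Γ) (by simp [d])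

theorem orR₂ (d : CKProves Γ (some B)) : CKProves Γ (some (.or A B)) :=
  of_lj (.orR₂ A B Γ) (by simp [d])

theorem impR (d : CKProves (A ::ₘ Γ) (some B)) : CKProves Γ (some (.imp A B)) :=
  of_lj (.impR A B Γ) (by simp [d])

theorem imp_self : CKProves Γ (some (.imp A A)) := impR (ax (Multiset.mem_cons_self _ _))

theorem kBox (d : CKProves Γ (some A)) : CKProves (Γ.map .box) (some (.box A)) :=
  .step (c := (_, _)) (Or.inr (Or.inl (KBoxRule.mk Γ A))) (by simp [d])

theorem kDia (d : CKProves (A ::ₘ Γ) (some B)) :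
    CKProves (.dia A ::ₘ Γ.map .box) (some (.dia B)) :=
  .step (c := (_, _)) (Or.inr (Or.inr (Or.inl (KDiaRule.mk Γ A B)))) (by simp [d])

theorem conjR {l : List (Fml α)} (h : ∀ F ∈ l, CKProves Γ (some F)) :
    CKProves Γ (some (conj l)) := by
  induction l with
  | nil => exact topR
  | cons A l ih =>
    cases l with
    | nil => simpa [conj] using h
    | cons B l => exact andR (h A (by simp)) (ih fun F hF => h F (by simp [hF]))

end CKProves

namespace Angling

variable {α : Type} (S : Angling α)

local notation "⟪" ψ "⟫" => Fml.atom (Angling.angle S ψ)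

@[simp]
theorem stdAtom_angle (ψ : Fml α) : S.stdAtom (S.angle ψ) = ψ := by
  have h : ∃ φ, S.angle φ = S.angle ψ := ⟨ψ, rfl⟩
  rw [stdAtom, dif_pos h]
  exact S.inj h.choose_spec

@[simp]
theorem angled_angle (ψ : Fml α) : S.Angled (S.angle ψ) := ⟨ψ, rfl⟩

theorem ckProves_angle_of_tr {Γ : Multiset (Fml α)} {ψ : Fml α}
    (d : CKProves Γ (some (S.tr ψ))) : CKProves Γ (some ⟪ψ⟫) := by
  refine d.cut ?_
  cases ψ with
  | atom | top => exact .ax (Multiset.mem_cons_self _ _)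
  | bot => exact .botL (Multiset.mem_cons_self _ _)
  | and | or | imp | box | dia => exact .andL (Multiset.mem_cons_self _ _) (.ax (by simp))

def ValidHorn (F : Fml α) : Prop :=
  ModalHorn F ∧ F.AtomsIn S.Angled ∧ CKProves 0 (some (S.std F))

variable {S}

theorem ValidHorn.box {F : Fml α} (h : S.ValidHorn F) : S.ValidHorn (.box F) :=
  ⟨.box h.1, h.2.1, by simpa [std, Fml.subst] using h.2.2.kBox⟩

theorem validHorn_angle {ψ : Fml α} (h : CKProves 0 (some ψ)) : S.ValidHorn ⟪ψ⟫ :=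
  ⟨.atom _, by simp [Fml.AtomsIn], by simpa [std, Fml.subst] using h⟩

theorem validHorn_imp_angle {ψ χ : Fml α} (h : CKProves 0 (some (.imp ψ χ))) :
    S.ValidHorn (.imp ⟪ψ⟫ ⟪χ⟫) :=
  ⟨.imp (.single (.atom _)) (.atom _), by simp [Fml.AtomsIn], by simpa [std, Fml.subst] using h⟩

theorem validHorn_and_imp_angle {ψ₁ ψ₂ χ : Fml α}
    (h : CKProves 0 (some (.imp (.and ψ₁ ψ₂) χ))) :
    S.ValidHorn (.imp (.and ⟪ψ₁⟫ ⟪ψ₂⟫) ⟪χ⟫) :=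
  ⟨.imp (.and (.single (.atom _)) (.single (.atom _))) (.atom _), by simp [Fml.AtomsIn],
    by simpa [std, Fml.subst] using h⟩

theorem validHorn_dia_imp_angle {ψ χ : Fml α} (h : CKProves 0 (some (.imp (.dia ψ) χ))) :
    S.ValidHorn (.imp (.dia ⟪ψ⟫) ⟪χ⟫) :=
  ⟨.imp (.single (.dia (.atom _))) (.atom _), by simp [Fml.AtomsIn],
    by simpa [std, Fml.subst] using h⟩

theorem validHorn_imp_box_angle {ψ χ : Fml α} (h : CKProves 0 (some (.imp ψ (.box χ)))) :
    S.ValidHorn (.imp ⟪ψ⟫ (.box ⟪χ⟫)) :=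
  ⟨.imp (.single (.atom _)) (.box (.atom _)), by simp [Fml.AtomsIn],
    by simpa [std, Fml.subst] using h⟩

end Angling

@[elab_as_elim]
theorem AlmostPos.atomic_induction {α : Type} {motive : ∀ A : Fml α, AlmostPos A → Prop}
    (atom : ∀ a, motive (.atom a) (.basic (.atom a)))
    (top : motive .top (.basic .top))
    (bot : motive .bot (.basic .bot))
    (and : ∀ {A B} (hA : AlmostPos A) (hB : AlmostPos B),
      motive A hA → motive B hB → motive (.and A B) (hA.and hB))
    (or : ∀ {A B} (hA : AlmostPos A) (hB : AlmostPos B),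
      motive A hA → motive B hB → motive (.or A B) (hA.or hB))
    (box : ∀ {A} (hA : AlmostPos A), motive A hA → motive (.box A) hA.box)
    (dia : ∀ {A} (hA : AlmostPos A), motive A hA → motive (.dia A) hA.dia)
    (imp : ∀ {A B} (hA : Basic A) (hB : AlmostPos B), motive B hB → motive (.imp A B) (.imp hA hB))
    {A : Fml α} (hA : AlmostPos A) : motive A hA := by
  induction hA with
  | basic hA =>
    induction hA with
    | atom a => exact atom a
    | top => exact top
    | bot => exact bot
    | and _ _ ihA ihB => exact and _ _ ihA ihB
    | or _ _ ihA ihB => exact or _ _ ihA ihB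
    | dia _ ih => exact dia _ ih
  | and _ _ ihA ihB => exact and _ _ ihA ihB
  | or _ _ ihA ihB => exact or _ _ ihA ihB
  | box _ ih => exact box _ ih
  | dia _ ih => exact dia _ ih
  | imp hA _ ih => exact imp hA _ ih

section Translation

open Angling

variable {α β : Type} (S : Angling α) (σ : β → Fml α)

local notation "⟪" ψ "⟫" => Fml.atom (Angling.angle S ψ)

theorem Basic.tr_subst_of_subst_tr {B : Fml β} (hB : Basic B) :
    ∃ Υ : List (Fml α), (∀ F ∈ Υ, S.ValidHorn F) ∧
      CKProves (B.subst (fun b => S.tr (σ b)) ::ₘ ↑Υ) (some (S.tr (B.subst σ))) := by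
  induction hB with
  | atom b => exact ⟨[], by simp, .ax (by simp [Fml.subst])⟩
  | top =>
    exact ⟨[⟪.top⟫], by simpa using validHorn_angle .topR, .ax (by simp [Fml.subst, Angling.tr])⟩
  | bot => exact ⟨[], by simp, .botL (by simp [Fml.subst])⟩
  | @and B C _ _ ihB ihC =>
    obtain ⟨ΥB, hΥB, dB⟩ := ihB
    obtain ⟨ΥC, hΥC, dC⟩ := ihC
    refine ⟨.imp (.and ⟪B.subst σ⟫ ⟪C.subst σ⟫) ⟪.and (B.subst σ) (C.subst σ)⟫ :: (ΥB ++ ΥC),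
      List.forall_mem_cons.2 ⟨validHorn_and_imp_angle .imp_self,
        List.forall_mem_append.2 ⟨hΥB, hΥC⟩⟩, ?_⟩
    simp only [Fml.subst, Angling.tr]
    refine .andL (Multiset.mem_cons_self _ _) (.andR (.andR (dB.mono ?_) (dC.mono ?_))
      (.mp (by simp) (.andR ((S.ckProves_angle_of_tr dB).mono ?_)
        ((S.ckProves_angle_of_tr dC).mono ?_))))
    all_goals intro F; simp; tauto
  | @or B C _ _ ihB ihC =>
    obtain ⟨ΥB, hΥB, dB⟩ := ihB
    obtain ⟨ΥC, hΥC, dC⟩ := ihC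
    refine ⟨.imp ⟪B.subst σ⟫ ⟪.or (B.subst σ) (C.subst σ)⟫ ::
      .imp ⟪C.subst σ⟫ ⟪.or (B.subst σ) (C.subst σ)⟫ :: (ΥB ++ ΥC),
      List.forall_mem_cons.2 ⟨validHorn_imp_angle (.impR (.orR₁ (.ax (by simp)))),
        List.forall_mem_cons.2 ⟨validHorn_imp_angle (.impR (.orR₂ (.ax (by simp)))),
          List.forall_mem_append.2 ⟨hΥB, hΥC⟩⟩⟩, ?_⟩
    simp only [Fml.subst, Angling.tr]
    refine .orL (Multiset.mem_cons_self _ _)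
      (.andR (.orR₁ (dB.mono ?_)) (.mp (by simp) ((S.ckProves_angle_of_tr dB).mono ?_)))
      (.andR (.orR₂ (dC.mono ?_)) (.mp (by simp) ((S.ckProves_angle_of_tr dC).mono ?_)))
    all_goals intro F; simp; tauto
  | @dia C _ ih =>
    obtain ⟨Υ, hΥ, d⟩ := ih
    refine ⟨.imp (.dia ⟪C.subst σ⟫) ⟪.dia (C.subst σ)⟫ :: Υ.map .box,
      List.forall_mem_cons.2 ⟨validHorn_dia_imp_angle .imp_self,
        List.forall_mem_map.2 fun F hF => (hΥ F hF).box⟩, ?_⟩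
    simp only [Fml.subst, Angling.tr]
    refine .andR (d.kDia.mono ?_) (.mp (by simp) ((S.ckProves_angle_of_tr d).kDia.mono ?_))
    all_goals intro F; simp; tauto

theorem AlmostPos.subst_tr_of_tr_subst {B : Fml β} (hB : AlmostPos B) :
    ∃ Υ : List (Fml α), (∀ F ∈ Υ, S.ValidHorn F) ∧
      CKProves (S.tr (B.subst σ) ::ₘ ↑Υ) (some (B.subst (fun b => S.tr (σ b)))) := by
  induction hB using AlmostPos.atomic_induction with
  | atom b => exact ⟨[], by simp, .ax (by simp [Fml.subst])⟩
  | top => exact ⟨[], by simp, .topR⟩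
  | bot => exact ⟨[], by simp, .botL (by simp [Fml.subst, Angling.tr])⟩
  | and _ _ ihB ihC =>
    obtain ⟨ΥB, hΥB, dB⟩ := ihB
    obtain ⟨ΥC, hΥC, dC⟩ := ihC
    refine ⟨ΥB ++ ΥC, List.forall_mem_append.2 ⟨hΥB, hΥC⟩, ?_⟩
    simp only [Fml.subst, Angling.tr]
    refine .andL (Multiset.mem_cons_self _ _) (.andL (Multiset.mem_cons_self _ _)
      (.andR (dB.mono ?_) (dC.mono ?_)))
    all_goals intro F; simp; tauto
  | or _ _ ihB ihC =>
    obtain ⟨ΥB, hΥB, dB⟩ := ihB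
    obtain ⟨ΥC, hΥC, dC⟩ := ihC
    refine ⟨ΥB ++ ΥC, List.forall_mem_append.2 ⟨hΥB, hΥC⟩, ?_⟩
    simp only [Fml.subst, Angling.tr]
    refine .andL (Multiset.mem_cons_self _ _) (.orL (Multiset.mem_cons_self _ _)
      (.orR₁ (dB.mono ?_)) (.orR₂ (dC.mono ?_)))
    all_goals intro F; simp; tauto
  | box _ ih =>
    obtain ⟨Υ, hΥ, d⟩ := ih
    refine ⟨Υ.map .box, List.forall_mem_map.2 fun F hF => (hΥ F hF).box, ?_⟩
    simp only [Fml.subst, Angling.tr]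
    refine .andL (Multiset.mem_cons_self _ _) (d.kBox.mono ?_)
    intro F; simp; tauto
  | dia _ ih =>
    obtain ⟨Υ, hΥ, d⟩ := ih
    refine ⟨Υ.map .box, List.forall_mem_map.2 fun F hF => (hΥ F hF).box, ?_⟩
    simp only [Fml.subst, Angling.tr]
    refine .andL (Multiset.mem_cons_self _ _) (d.kDia.mono ?_)
    intro F; simp; tauto
  | @imp B C hB _ ihC =>
    obtain ⟨ΥB, hΥB, dB⟩ := hB.tr_subst_of_subst_tr S σ
    obtain ⟨ΥC, hΥC, dC⟩ := ihC
    refine ⟨ΥB ++ ΥC, List.forall_mem_append.2 ⟨hΥB, hΥC⟩, ?_⟩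
    simp only [Fml.subst, Angling.tr]
    refine .andL (Multiset.mem_cons_self _ _) (.impR
      (.impL (A := S.tr (B.subst σ)) (B := S.tr (C.subst σ)) (by simp) (dB.mono ?_) (dC.mono ?_)))
    all_goals intro F; simp; tauto

theorem Constructive.tr_subst_of_subst_tr {A : Fml β} (hA : Constructive A) :
    ∃ Υ : List (Fml α), (∀ F ∈ Υ, S.ValidHorn F) ∧
      CKProves (⟪A.subst σ⟫ ::ₘ A.subst (fun b => S.tr (σ b)) ::ₘ ↑Υ)
        (some (S.tr (A.subst σ))) := by
  induction hA with
  | basic hB =>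
    obtain ⟨Υ, hΥ, d⟩ := hB.tr_subst_of_subst_tr S σ
    exact ⟨Υ, hΥ, d.mono (by intro F; simp; tauto)⟩
  | @and B C _ _ ihB ihC =>
    obtain ⟨ΥB, hΥB, dB⟩ := ihB
    obtain ⟨ΥC, hΥC, dC⟩ := ihC
    refine ⟨.imp ⟪.and (B.subst σ) (C.subst σ)⟫ ⟪B.subst σ⟫ ::
      .imp ⟪.and (B.subst σ) (C.subst σ)⟫ ⟪C.subst σ⟫ :: (ΥB ++ ΥC),
      List.forall_mem_cons.2
        ⟨validHorn_imp_angle (.impR (.andL (Multiset.mem_cons_self _ _) (.ax (by simp)))),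
        List.forall_mem_cons.2
          ⟨validHorn_imp_angle (.impR (.andL (Multiset.mem_cons_self _ _) (.ax (by simp)))),
          List.forall_mem_append.2 ⟨hΥB, hΥC⟩⟩⟩, ?_⟩
    simp only [Fml.subst, Angling.tr]
    refine .andL (Multiset.mem_cons_of_mem (Multiset.mem_cons_self _ _)) (.andR (.andR
      (.cut (A := ⟪B.subst σ⟫) (.mp (A := ⟪.and (B.subst σ) (C.subst σ)⟫) (by simp)
        (.ax (by simp))) (dB.mono ?_))
      (.cut (A := ⟪C.subst σ⟫) (.mp (A := ⟪.and (B.subst σ) (C.subst σ)⟫) (by simp)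
        (.ax (by simp))) (dC.mono ?_)))
      (.ax (by simp)))
    all_goals intro F; simp; tauto
  | @box C _ ih =>
    obtain ⟨Υ, hΥ, d⟩ := ih
    refine ⟨.imp ⟪.box (C.subst σ)⟫ (.box ⟪C.subst σ⟫) :: Υ.map .box,
      List.forall_mem_cons.2 ⟨validHorn_imp_box_angle .imp_self,
        List.forall_mem_map.2 fun F hF => (hΥ F hF).box⟩, ?_⟩
    simp only [Fml.subst, Angling.tr]
    refine .andR (.cut (A := .box ⟪C.subst σ⟫) (.mp (A := ⟪.box (C.subst σ)⟫) (by simp)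
      (.ax (by simp))) (d.kBox.mono ?_)) (.ax (by simp))
    intro F; simp; tauto
  | @imp B C hB _ ihC =>
    obtain ⟨ΥB, hΥB, dB⟩ := hB.subst_tr_of_tr_subst S σ
    obtain ⟨ΥC, hΥC, dC⟩ := ihC
    refine ⟨.imp (.and ⟪.imp (B.subst σ) (C.subst σ)⟫ ⟪B.subst σ⟫) ⟪C.subst σ⟫ :: (ΥB ++ ΥC),
      List.forall_mem_cons.2 ⟨validHorn_and_imp_angle (.impR (.andL (Multiset.mem_cons_self _ _)
          (.mp (A := B.subst σ) (by simp) (.ax (by simp))))),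
        List.forall_mem_append.2 ⟨hΥB, hΥC⟩⟩, ?_⟩
    simp only [Fml.subst, Angling.tr]
    refine .andR (.impR (.cut (A := C.subst fun b => S.tr (σ b))
      (.mp (A := B.subst fun b => S.tr (σ b)) (by simp) (dB.mono ?_))
      (.cut (A := ⟪C.subst σ⟫) (.mp (A := .and ⟪.imp (B.subst σ) (C.subst σ)⟫ ⟪B.subst σ⟫)
        (by simp) (.andR (.ax (by simp)) (S.ckProves_angle_of_tr (.ax (by simp)))))
        (dC.mono ?_)))) (.ax (by simp))
    all_goals intro F; simp; tauto

end Translation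

/-- commutation of the translation `t` with constructive
formulas. -/
theorem statement_7 (S : Angling ℕ) (k : ℕ) (A : Fml (Fin k)) (hA : Constructive A)
    (φ : Fin k → Fml ℕ) :
    ∃ Υ : List (Fml ℕ),
      (∀ F ∈ Υ, ModalHorn F ∧ F.AtomsIn S.Angled) ∧
      Derives (CKSys (fun _ : Fml ℕ => False))
        (Fml.atom (S.angle (A.subst φ)) ::ₘ (A.subst fun i => S.tr (φ i)) ::ₘ
          (↑Υ : Multiset (Fml ℕ)))
        (some (S.tr (A.subst φ))) ∧
      Derives (CKSys (fun _ : Fml ℕ => False)) 0 (some (conj (Υ.map S.std))) := by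
  obtain ⟨Υ, hΥ, d⟩ := hA.tr_subst_of_subst_tr S φ
  exact ⟨Υ, fun F hF => ⟨(hΥ F hF).1, (hΥ F hF).2.1⟩, d,
    CKProves.conjR (List.forall_mem_map.2 fun F hF => (hΥ F hF).2.2)⟩

end UPT
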